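/- arXiv:1812.02491 — 2 statements merged into one kernel-verified Lean document; each statement's English description precedes it below -/
import Mathlib

section
/- Let n ≥ 3 and let ω¹, ω², ω³ ∈ Rₙⁿ be integrable formal 1-forms that are pairwise independent (for each i ≠ j there are indices p, q with ωⁱ_p·ωʲ_q ≠ ωⁱ_q·ωʲ_p) and such that for each i the coefficients ωⁱ₁,…,ωⁱₙ have no common non-unit divisor in Rₙ. Suppose there exist u, v ∈ Kₙⁿ such that the 2-form η := u ∧ v is nonzero in the exterior algebra of the Kₙ-vector space Kₙⁿ and η ∧ ω̄ⁱ = 0 for i = 1,2,3, where ω̄ⁱ denotes the image of ωⁱ in Kₙⁿ. Then there exist nonzero g₁, g₂, g₃ ∈ Rₙ such that g₃·ω³ = g₁·ω¹ + g₂·ω² componentwise, for every s, t ∈ ℂ the 1-form s·g₁·ω¹ + t·g₂·ω² is integrable, and η is a Kₙ-scalar multiple of ω̄¹ ∧ ω̄². -/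
open ExteriorAlgebra MvPowerSeries

set_option synthInstance.maxHeartbeats 1000000
set_option maxHeartbeats 2000000

instance (n : ℕ) : IsDomain (MvPowerSeries (Fin n) ℂ) := NoZeroDivisors.to_isDomain _

/-- `Kₙ`, the fraction field of `ℂ⟦x₁,…,xₙ⟧`: germs of formal meromorphic
functions. -/
abbrev Kn (n : ℕ) := FractionRing (MvPowerSeries (Fin n) ℂ)

/-- Formal partial derivative `∂ᵢ` on multivariate formal power series. -/
noncomputable def pd {n : ℕ} (i : Fin n) (f : MvPowerSeries (Fin n) ℂ) :
    MvPowerSeries (Fin n) ℂ :=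
  fun m => ((m i : ℂ) + 1) * MvPowerSeries.coeff (m + Finsupp.single i 1) f

/-- A formal 1-form `ω = Σᵢ ωᵢ dxᵢ` on `(ℂⁿ,0)` is integrable (`ω ∧ dω = 0`). -/
def IntegrableN {n : ℕ} (ω : Fin n → MvPowerSeries (Fin n) ℂ) : Prop :=
  ∀ i j k : Fin n, i < j → j < k →
    ω i * (pd j (ω k) - pd k (ω j)) - ω j * (pd i (ω k) - pd k (ω i))
      + ω k * (pd i (ω j) - pd j (ω i)) = 0

/-- The image of a formal 1-form in the space of meromorphic 1-forms. -/
noncomputable def toMero {n : ℕ} (ω : Fin n → MvPowerSeries (Fin n) ℂ) :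
    Fin n → Kn n :=
  fun p => algebraMap (MvPowerSeries (Fin n) ℂ) (Kn n) (ω p)

/-! Since `η = u ∧ v ≠ 0` and `η ∧ ω̄ⁱ = 0`, every `ω̄ⁱ` lies in the plane spanned by `u` and `v`.
The independent forms `ω̄¹, ω̄²` span that plane as well, so `η` is a multiple of `ω̄¹ ∧ ω̄²` and
`ω̄³ = a ω̄¹ + b ω̄²`, with `a, b ≠ 0` because `ω̄³` is independent of each of `ω̄¹, ω̄²`. Clearing
denominators gives `g₃ ω³ = g₁ ω¹ + g₂ ω²`. Integrability of `ω` is the quadratic condition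
`ω ∧ dω = 0`, preserved by multiplication with a function; writing `α = g₁ ω¹`, `β = g₂ ω²`,
the mixed term of `(sα + tβ) ∧ d(sα + tβ)` is `st` times the difference of the conditions for
`α + β = g₃ ω³` and for `α`, `β`, so it vanishes. -/

section ExteriorAlgebra

variable {K V : Type*} [Field K] [AddCommGroup V] [Module K V]

theorem ExteriorAlgebra.ιMulti_ne_zero_of_linearIndependent {k : ℕ} {f : Fin k → V}
    (hf : LinearIndependent K f) : ιMulti K k f ≠ 0 := by
  intro h
  apply (exteriorPower.ιMulti_family_linearIndependent_field k hf).ne_zero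
    (Set.powersetCard.ofFinEmbEquiv (RelEmbedding.refl _))
  ext
  simpa [exteriorPower.ιMulti_family] using h

theorem ExteriorAlgebra.ι_mul_ι_ne_zero_iff {u v : V} :
    ι K u * ι K v ≠ 0 ↔ LinearIndependent K ![u, v] := by
  have h : ιMulti K 2 ![u, v] = ι K u * ι K v := by simp [ιMulti_apply]
  rw [← h]
  exact ⟨not_imp_comm.mp ((ιMulti K 2).map_linearDependent _),
    ιMulti_ne_zero_of_linearIndependent⟩

theorem ExteriorAlgebra.mem_span_pair_of_ι_mul_ι_mul_ι_eq_zero {u v w : V}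
    (huv : ι K u * ι K v ≠ 0) (h : ι K u * ι K v * ι K w = 0) :
    w ∈ Submodule.span K {u, v} := by
  by_contra hw
  have huvw : LinearIndependent K ![u, v, w] := by
    rw [show ![u, v, w] = Fin.snoc ![u, v] w by ext i; fin_cases i <;> rfl,
      linearIndependent_finSnoc, show Set.range ![u, v] = {u, v} by simp [Set.pair_comm]]
    exact ⟨ι_mul_ι_ne_zero_iff.mp huv, hw⟩
  apply ιMulti_ne_zero_of_linearIndependent huvw
  simpa [ιMulti_apply, mul_assoc] using h

theorem ExteriorAlgebra.exists_ι_mul_ι_eq_smul {u v x y : V}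
    (hx : x ∈ Submodule.span K {u, v}) (hy : y ∈ Submodule.span K {u, v})
    (hxy : LinearIndependent K ![x, y]) :
    ∃ c : K, ι K u * ι K v = c • (ι K x * ι K y) := by
  obtain ⟨a, b, rfl⟩ := Submodule.mem_span_pair.mp hx
  obtain ⟨c, d, rfl⟩ := Submodule.mem_span_pair.mp hy
  have hvu : ι K v * ι K u = -(ι K u * ι K v) :=
    eq_neg_of_add_eq_zero_right (ι_add_mul_swap u v)
  have hdet : ι K (a • u + b • v) * ι K (c • u + d • v)
      = (a * d - c * b) • (ι K u * ι K v) := by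
    simp only [map_add, map_smul, add_mul, mul_add, smul_mul_assoc, mul_smul_comm, ι_sq_zero,
      hvu, smul_zero, smul_neg]
    module
  have hdet_ne : a * d - c * b ≠ 0 := by
    rintro h0
    apply ι_mul_ι_ne_zero_iff.mpr hxy
    rw [hdet, h0, zero_smul]
  exact ⟨(a * d - c * b)⁻¹, by rw [hdet, smul_smul, inv_mul_cancel₀ hdet_ne, one_smul]⟩

end ExteriorAlgebra

section LinearAlgebra

variable {K V : Type*} [Field K] [AddCommGroup V] [Module K V]

theorem mem_span_pair_of_linearIndependent_of_mem_span_pair {u v x y z : V}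
    (hx : x ∈ Submodule.span K {u, v}) (hy : y ∈ Submodule.span K {u, v})
    (hz : z ∈ Submodule.span K {u, v}) (hxy : LinearIndependent K ![x, y]) :
    z ∈ Submodule.span K {x, y} := by
  have hrange : ∀ a b : V, Set.range ![a, b] = {a, b} := fun a b => by simp [Set.pair_comm]
  have hle : Submodule.span K {x, y} ≤ Submodule.span K {u, v} :=
    Submodule.span_le.mpr (Set.insert_subset hx (Set.singleton_subset_iff.mpr hy))
  have hrank : Module.finrank K (Submodule.span K {u, v})
      ≤ Module.finrank K (Submodule.span K {x, y}) := by
    rw [← hrange u v, ← hrange x y, finrank_span_eq_card hxy]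
    exact finrank_range_le_card _
  have : FiniteDimensional K (Submodule.span K {u, v}) :=
    FiniteDimensional.span_of_finite K (Set.toFinite _)
  rwa [Submodule.eq_of_le_of_finrank_le hle hrank]

theorem coeff_ne_zero_of_linearIndependent_pair {x y z : V} {a b : K}
    (hz : z = a • x + b • y) (hxz : LinearIndependent K ![x, z]) : b ≠ 0 := by
  rintro rfl
  have := LinearIndependent.pair_iff.mp hxz a (-1) (by simp [hz])
  exact one_ne_zero (neg_eq_zero.mp this.2)

theorem linearIndependent_pair_of_mul_ne_mul {ι : Type*} {x y : ι → K} {p q : ι}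
    (h : x p * y q ≠ x q * y p) : LinearIndependent K ![x, y] := by
  refine LinearIndependent.pair_iff.mpr fun s t hst => ?_
  have hp := congrFun hst p
  have hq := congrFun hst q
  simp only [Pi.add_apply, Pi.smul_apply, smul_eq_mul, Pi.zero_apply] at hp hq
  have hdet : x p * y q - x q * y p ≠ 0 := sub_ne_zero.mpr h
  have hs : s * (x p * y q - x q * y p) = 0 := by linear_combination y q * hp - y p * hq
  have ht : t * (x p * y q - x q * y p) = 0 := by linear_combination x p * hq - x q * hp
  exact ⟨(mul_eq_zero.mp hs).resolve_right hdet, (mul_eq_zero.mp ht).resolve_right hdet⟩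

end LinearAlgebra

theorem IsFractionRing.exists_mul_eq_mul_add_mul {R K ι : Type*} [CommRing R] [IsDomain R]
    [Field K] [Algebra R K] [IsFractionRing R K] {x y z : ι → R} {a b : K} (ha : a ≠ 0)
    (hb : b ≠ 0) (h : algebraMap R K ∘ z = a • (algebraMap R K ∘ x) + b • (algebraMap R K ∘ y)) :
    ∃ f g d : R, f ≠ 0 ∧ g ≠ 0 ∧ d ≠ 0 ∧ ∀ p, d * z p = f * x p + g * y p := by
  obtain ⟨⟨d, hd⟩, hint⟩ :=
    IsLocalization.exist_integer_multiples (nonZeroDivisors R) Finset.univ ![a, b]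
  obtain ⟨f, hf⟩ := hint 0 (Finset.mem_univ _)
  obtain ⟨g, hg⟩ := hint 1 (Finset.mem_univ _)
  simp only [Matrix.cons_val_zero, Matrix.cons_val_one, Algebra.smul_def] at hf hg
  have hd' : algebraMap R K d ≠ 0 := IsFractionRing.to_map_ne_zero_of_mem_nonZeroDivisors hd
  refine ⟨f, g, d, ?_, ?_, nonZeroDivisors.ne_zero hd, fun p => IsFractionRing.injective R K ?_⟩
  · rintro rfl
    simp [ha, hd'] at hf
  · rintro rfl
    simp [hb, hd'] at hg
  · have hp := congrFun h p
    simp only [Function.comp_apply, Pi.add_apply, Pi.smul_apply, smul_eq_mul] at hp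
    simp only [map_mul, map_add, hf, hg, hp]
    ring

section Integrability

variable {n : ℕ}

theorem pd_eq_pderiv (i : Fin n) (f : MvPowerSeries (Fin n) ℂ) : pd i f = pderiv ℂ i f := by
  ext m
  rw [coeff_pderiv, mul_comm]
  rfl

theorem pd_add (i : Fin n) (f g : MvPowerSeries (Fin n) ℂ) : pd i (f + g) = pd i f + pd i g := by
  simp only [pd_eq_pderiv, map_add]

theorem pd_mul (i : Fin n) (f g : MvPowerSeries (Fin n) ℂ) :
    pd i (f * g) = pd i f * g + f * pd i g := by
  simp only [pd_eq_pderiv, Derivation.leibniz, smul_eq_mul]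
  ring

theorem pd_C_mul (i : Fin n) (s : ℂ) (f : MvPowerSeries (Fin n) ℂ) :
    pd i (C s * f) = C s * pd i f := by
  simp [pd_eq_pderiv]

theorem IntegrableN.mul {ω : Fin n → MvPowerSeries (Fin n) ℂ} (h : IntegrableN ω)
    (g : MvPowerSeries (Fin n) ℂ) : IntegrableN (fun p => g * ω p) := by
  intro i j k hij hjk
  simp only [pd_mul]
  linear_combination (g * g) * h i j k hij hjk

theorem IntegrableN.pencil {α β : Fin n → MvPowerSeries (Fin n) ℂ} (hα : IntegrableN α)
    (hβ : IntegrableN β) (hαβ : IntegrableN (fun p => α p + β p)) (s t : ℂ) :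
    IntegrableN (fun p => C s * α p + C t * β p) := by
  intro i j k hij hjk
  have e := hαβ i j k hij hjk
  simp only [pd_add] at e
  simp only [pd_add, pd_C_mul]
  linear_combination (C s * C s - C s * C t) * hα i j k hij hjk
    + (C t * C t - C s * C t) * hβ i j k hij hjk + (C s * C t) * e

end Integrability

theorem tangent_to_three_integrable_forms_gives_pencil_general (n : ℕ)
    (ω₁ ω₂ ω₃ : Fin n → MvPowerSeries (Fin n) ℂ)
    (hi₁ : IntegrableN ω₁) (hi₂ : IntegrableN ω₂) (hi₃ : IntegrableN ω₃)
    (h12 : ∃ p q : Fin n, ω₁ p * ω₂ q ≠ ω₁ q * ω₂ p)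
    (h13 : ∃ p q : Fin n, ω₁ p * ω₃ q ≠ ω₁ q * ω₃ p)
    (h23 : ∃ p q : Fin n, ω₂ p * ω₃ q ≠ ω₂ q * ω₃ p)
    (u v : Fin n → Kn n)
    (hη : ι (Kn n) u * ι (Kn n) v ≠ 0)
    (ht₁ : ι (Kn n) u * ι (Kn n) v * ι (Kn n) (toMero ω₁) = 0)
    (ht₂ : ι (Kn n) u * ι (Kn n) v * ι (Kn n) (toMero ω₂) = 0)
    (ht₃ : ι (Kn n) u * ι (Kn n) v * ι (Kn n) (toMero ω₃) = 0) :
    ∃ g₁ g₂ g₃ : MvPowerSeries (Fin n) ℂ, g₁ ≠ 0 ∧ g₂ ≠ 0 ∧ g₃ ≠ 0 ∧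
      (∀ p : Fin n, g₃ * ω₃ p = g₁ * ω₁ p + g₂ * ω₂ p) ∧
      (∀ s t : ℂ,
        IntegrableN (fun p => (C : ℂ →+* MvPowerSeries (Fin n) ℂ) s * (g₁ * ω₁ p) + (C : ℂ →+* MvPowerSeries (Fin n) ℂ) t * (g₂ * ω₂ p))) ∧
      (∃ c : Kn n, ι (Kn n) u * ι (Kn n) v
          = c • (ι (Kn n) (toMero ω₁) * ι (Kn n) (toMero ω₂))) := by
  have hind : ∀ {σ τ : Fin n → MvPowerSeries (Fin n) ℂ}, (∃ p q, σ p * τ q ≠ σ q * τ p) →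
      LinearIndependent (Kn n) ![toMero σ, toMero τ] := by
    rintro σ τ ⟨p, q, h⟩
    refine linearIndependent_pair_of_mul_ne_mul (p := p) (q := q) ?_
    simpa only [toMero, ← map_mul] using (IsFractionRing.injective _ (Kn n)).ne h
  have hw₁ := mem_span_pair_of_ι_mul_ι_mul_ι_eq_zero hη ht₁
  have hw₂ := mem_span_pair_of_ι_mul_ι_mul_ι_eq_zero hη ht₂
  have hw₃ := mem_span_pair_of_ι_mul_ι_mul_ι_eq_zero hη ht₃
  obtain ⟨a, b, hab⟩ := Submodule.mem_span_pair.mp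
    (mem_span_pair_of_linearIndependent_of_mem_span_pair hw₁ hw₂ hw₃ (hind h12))
  obtain ⟨g₁, g₂, g₃, hg₁, hg₂, hg₃, hg⟩ := IsFractionRing.exists_mul_eq_mul_add_mul
    (coeff_ne_zero_of_linearIndependent_pair (by rw [← hab, add_comm]) (hind h23))
    (coeff_ne_zero_of_linearIndependent_pair hab.symm (hind h13)) hab.symm
  refine ⟨g₁, g₂, g₃, hg₁, hg₂, hg₃, hg, fun s t => ?_,
    exists_ι_mul_ι_eq_smul hw₁ hw₂ (hind h12)⟩
  refine (hi₁.mul g₁).pencil (hi₂.mul g₂) ?_ s t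
  simpa only [← hg] using hi₃.mul g₃

/-- A codimension-two distribution (a nonzero decomposable meromorphic 2-form `η`)
tangent to three pairwise independent integrable 1-forms is the axis of a pencil of
integrable 1-forms containing them. -/
theorem tangent_to_three_integrable_forms_gives_pencil (n : ℕ) (hn : 3 ≤ n)
    (ω₁ ω₂ ω₃ : Fin n → MvPowerSeries (Fin n) ℂ)
    (hi₁ : IntegrableN ω₁) (hi₂ : IntegrableN ω₂) (hi₃ : IntegrableN ω₃)
    (h12 : ∃ p q : Fin n, ω₁ p * ω₂ q ≠ ω₁ q * ω₂ p)
    (h13 : ∃ p q : Fin n, ω₁ p * ω₃ q ≠ ω₁ q * ω₃ p)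
    (h23 : ∃ p q : Fin n, ω₂ p * ω₃ q ≠ ω₂ q * ω₃ p)
    (hcop₁ : ∀ d : MvPowerSeries (Fin n) ℂ, (∀ p, d ∣ ω₁ p) → IsUnit d)
    (hcop₂ : ∀ d : MvPowerSeries (Fin n) ℂ, (∀ p, d ∣ ω₂ p) → IsUnit d)
    (hcop₃ : ∀ d : MvPowerSeries (Fin n) ℂ, (∀ p, d ∣ ω₃ p) → IsUnit d)
    (u v : Fin n → Kn n)
    (hη : ι (Kn n) u * ι (Kn n) v ≠ 0)
    (ht₁ : ι (Kn n) u * ι (Kn n) v * ι (Kn n) (toMero ω₁) = 0)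
    (ht₂ : ι (Kn n) u * ι (Kn n) v * ι (Kn n) (toMero ω₂) = 0)
    (ht₃ : ι (Kn n) u * ι (Kn n) v * ι (Kn n) (toMero ω₃) = 0) :
    ∃ g₁ g₂ g₃ : MvPowerSeries (Fin n) ℂ, g₁ ≠ 0 ∧ g₂ ≠ 0 ∧ g₃ ≠ 0 ∧
      (∀ p : Fin n, g₃ * ω₃ p = g₁ * ω₁ p + g₂ * ω₂ p) ∧
      (∀ s t : ℂ,
        IntegrableN (fun p => (C : ℂ →+* MvPowerSeries (Fin n) ℂ) s * (g₁ * ω₁ p) + (C : ℂ →+* MvPowerSeries (Fin n) ℂ) t * (g₂ * ω₂ p))) ∧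
      (∃ c : Kn n, ι (Kn n) u * ι (Kn n) v
          = c • (ι (Kn n) (toMero ω₁) * ι (Kn n) (toMero ω₂))) :=
  tangent_to_three_integrable_forms_gives_pencil_general n ω₁ ω₂ ω₃ hi₁ hi₂ hi₃ h12 h13 h23 u v hη
    ht₁ ht₂ ht₃
end

section
/- Let n ≥ 1 and let ω ∈ Rₙⁿ be a nonzero integrable formal 1-form. Then there exists a meromorphic 1-form θ ∈ Kₙⁿ such that dω = θ ∧ ω; that is, for all i, j: ∂ᵢωⱼ − ∂ⱼωᵢ = θᵢ·ωⱼ − θⱼ·ωᵢ in Kₙ, identifying elements of Rₙ with their images in Kₙ. -/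
open MvPowerSeries

/-!
Choose `k` with `ωₖ ≠ 0` and put `θᵢ = (dω)ᵢₖ / ωₖ`. The `(i, j, k)` component of
`ω ∧ dω = 0` reads `ωₖ (dω)ᵢⱼ = ωⱼ (dω)ᵢₖ - ωᵢ (dω)ⱼₖ`, which after division by `ωₖ` is
`(dω)ᵢⱼ = θᵢ ωⱼ - θⱼ ωᵢ`. Integrability only prescribes the components with `i < j < k`;
the others follow because `ω ∧ dω` is alternating.
-/

theorem eq_zero_of_alternating_of_lt {ι M : Type*} [LinearOrder ι] [SubtractionMonoid M]
    (f : ι → ι → ι → M) (swap₁₂ : ∀ i j k, f j i k = -f i j k)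
    (swap₂₃ : ∀ i j k, f i k j = -f i j k) (diag₁₂ : ∀ i k, f i i k = 0)
    (diag₂₃ : ∀ i j, f i j j = 0) (hlt : ∀ i j k, i < j → j < k → f i j k = 0) (i j k : ι) :
    f i j k = 0 := by
  have of_lt : ∀ i j k, i < j → f i j k = 0 := by
    intro i j k hij
    rcases lt_trichotomy j k with hjk | rfl | hkj
    · exact hlt i j k hij hjk
    · exact diag₂₃ i j
    rw [← neg_eq_zero, ← swap₂₃]
    rcases lt_trichotomy i k with hik | rfl | hki
    · exact hlt i k j hik hkj
    · exact diag₁₂ i j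
    · rw [← neg_eq_zero, ← swap₁₂]
      exact hlt k i j hki hij
  rcases lt_trichotomy i j with hij | rfl | hji
  · exact of_lt i j k hij
  · exact diag₁₂ i k
  · rw [← neg_eq_zero, ← swap₁₂]
    exact of_lt j i k hji

section Wedge

variable {R : Type*} [CommRing R] {ι : Type*}

/-- The `(i, j, k)` component of the wedge product `ω ∧ η` of a 1-form and a 2-form. -/
def wedge (ω : ι → R) (η : ι → ι → R) (i j k : ι) : R :=
  ω i * η j k - ω j * η i k + ω k * η i j

theorem map_wedge {S : Type*} [CommRing S] (f : R →+* S) (ω : ι → R) (η : ι → ι → R)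
    (i j k : ι) :
    f (wedge ω η i j k) = wedge (fun i => f (ω i)) (fun i j => f (η i j)) i j k := by
  simp only [wedge, map_add, map_sub, map_mul]

theorem wedge_eq_zero_of_lt [LinearOrder ι] {ω : ι → R} {η : ι → ι → R}
    (antisymm : ∀ i j, η j i = -η i j) (diag : ∀ i, η i i = 0)
    (hlt : ∀ i j k, i < j → j < k → wedge ω η i j k = 0) (i j k : ι) :
    wedge ω η i j k = 0 := by
  refine eq_zero_of_alternating_of_lt (wedge ω η) (fun i j k => ?_) (fun i j k => ?_)
    (fun i k => ?_) (fun i j => ?_) hlt i j k <;> simp only [wedge]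
  · linear_combination ω k * antisymm i j
  · linear_combination ω i * antisymm j k
  · linear_combination ω k * diag i
  · linear_combination ω i * diag j

theorem exists_eq_wedge_of_wedge_eq_zero {K : Type*} [Field K] {ω : ι → K} {η : ι → ι → K}
    {k : ι} (hk : ω k ≠ 0) (h : ∀ i j, wedge ω η i j k = 0) :
    ∃ θ : ι → K, ∀ i j, η i j = θ i * ω j - θ j * ω i := by
  refine ⟨fun i => η i k / ω k, fun i j => ?_⟩
  have hijk := h i j
  simp only [wedge] at hijk
  field_simp
  linear_combination hijk

end Wedge

noncomputable def formalExtDeriv {n : ℕ} (ω : Fin n → MvPowerSeries (Fin n) ℂ) (i j : Fin n) :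
    MvPowerSeries (Fin n) ℂ :=
  pd i (ω j) - pd j (ω i)

theorem IntegrableN.wedge_formalExtDeriv_eq_zero {n : ℕ} {ω : Fin n → MvPowerSeries (Fin n) ℂ}
    (hint : IntegrableN ω) (i j k : Fin n) : wedge ω (formalExtDeriv ω) i j k = 0 :=
  wedge_eq_zero_of_lt (fun _ _ => (neg_sub _ _).symm) (fun _ => sub_self _) hint i j k

theorem exists_meromorphic_theta_general (n : ℕ)
    (ω : Fin n → MvPowerSeries (Fin n) ℂ) (hω : ω ≠ 0) (hint : IntegrableN ω) :
    ∃ θ : Fin n → FractionRing (MvPowerSeries (Fin n) ℂ),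
      ∀ i j : Fin n,
        algebraMap (MvPowerSeries (Fin n) ℂ) (FractionRing (MvPowerSeries (Fin n) ℂ))
            (pd i (ω j) - pd j (ω i))
          = θ i * algebraMap (MvPowerSeries (Fin n) ℂ)
              (FractionRing (MvPowerSeries (Fin n) ℂ)) (ω j)
            - θ j * algebraMap (MvPowerSeries (Fin n) ℂ)
              (FractionRing (MvPowerSeries (Fin n) ℂ)) (ω i) := by
  set φ := algebraMap (MvPowerSeries (Fin n) ℂ) (FractionRing (MvPowerSeries (Fin n) ℂ))
  obtain ⟨k, hk⟩ := Function.ne_iff.mp hω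
  have hφk : φ (ω k) ≠ 0 :=
    (map_ne_zero_iff φ (IsFractionRing.injective _ _)).mpr hk
  exact exists_eq_wedge_of_wedge_eq_zero (η := fun i j => φ (formalExtDeriv ω i j)) hφk
    fun i j => by rw [← map_wedge, hint.wedge_formalExtDeriv_eq_zero, map_zero]

/-- For a nonzero integrable formal 1-form `ω` there exists a meromorphic 1-form `θ`
with `dω = θ ∧ ω`. -/
theorem exists_meromorphic_theta (n : ℕ) (hn : 1 ≤ n)
    (ω : Fin n → MvPowerSeries (Fin n) ℂ) (hω : ω ≠ 0) (hint : IntegrableN ω) :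
    ∃ θ : Fin n → FractionRing (MvPowerSeries (Fin n) ℂ),
      ∀ i j : Fin n,
        algebraMap (MvPowerSeries (Fin n) ℂ) (FractionRing (MvPowerSeries (Fin n) ℂ))
            (pd i (ω j) - pd j (ω i))
          = θ i * algebraMap (MvPowerSeries (Fin n) ℂ)
              (FractionRing (MvPowerSeries (Fin n) ℂ)) (ω j)
            - θ j * algebraMap (MvPowerSeries (Fin n) ℂ)
              (FractionRing (MvPowerSeries (Fin n) ℂ)) (ω i) :=
  exists_meromorphic_theta_general n ω hω hint
end
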